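/- Let d ≥ 1, e = 2^d, and let λ_d = (M_d w_0)(M_d w_1)···(M_d w_{2^e−1}) be the concatenation over the lexicographic enumeration w_0, ..., w_{2^e−1} of F_2^e. Fix a binary word a of length d+e with complement of a_1...a_d equal to a_{e+1}...a_{e+d}, and fix an index z with d ≤ z ≤ e and a_z = 0. Then there exists a unique even index n such that a occurs in λ_d starting at the position that aligns a_z with the last (e-th) symbol of the block M_d w_n; namely, M_d w_n equals the word (complement of a_{z+1}...a_e) followed by a_1...a_z. -/

import Mathlib

open Matrix

/-- The Pascal-triangle matrix over `F₂`: `M 0 = (1)`,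
`M (d+1) = [[M d, M d],[0, M d]]`. -/
def pascalM : (d : ℕ) → Matrix (Fin (2^d)) (Fin (2^d)) (ZMod 2)
  | 0 => fun _ _ => 1
  | d+1 =>
    Matrix.reindex (finSumFinEquiv.trans (finCongr (by rw [pow_succ]; ring)))
      (finSumFinEquiv.trans (finCongr (by rw [pow_succ]; ring)))
      (Matrix.fromBlocks (pascalM d) (pascalM d) 0 (pascalM d))

/-- The `n`-th vector of `F₂^e` in lexicographic order (as binary words,
index `0` being the most significant bit). -/
def vecOf (e n : ℕ) : Fin e → ZMod 2 := fun i => ((n / 2^(e - 1 - i.val)) % 2 : ℕ)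

/-- Rotation moving the last entry of a vector to the front. -/
def rot {e : ℕ} (v : Fin e → ZMod 2) : Fin e → ZMod 2 :=
  fun i => v ⟨(i.val + (e - 1)) % e, Nat.mod_lt _ i.pos⟩

/-- `Suitable e ν` : the tuple `(ν 0, …, ν (e-1))` (representing `n_1,…,n_e`)
satisfies `n_e = 0` and `n_{i+1} ≤ n_i ≤ n_{i+1}+1`. -/
def Suitable (e : ℕ) (ν : ℕ → ℕ) : Prop :=
  ν (e - 1) = 0 ∧ ∀ j, j + 2 ≤ e → ν (j+1) ≤ ν j ∧ ν j ≤ ν (j+1) + 1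

/-- The matrix `M_d^ν`, whose `j`-th column is the `j`-th column of `M_d`
rotated `ν j` times. -/
def pascalMnu (d : ℕ) (ν : ℕ → ℕ) : Matrix (Fin (2^d)) (Fin (2^d)) (ZMod 2) :=
  fun i j => (rot^[ν j.val] (fun r => pascalM d r j)) i

/-- The `d`-th Levin block `λ_d = (M_d w_0)(M_d w_1)⋯(M_d w_{2^e-1})`
as an `ℕ`-indexed word (`e = 2^d`). -/
def levinBlock (d : ℕ) (p : ℕ) : ZMod 2 :=
  (pascalM d).mulVec (vecOf (2^d) (p / 2^d)) ⟨p % 2^d, Nat.mod_lt _ (Nat.two_pow_pos d)⟩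

/-- Length of the `d`-th Levin block: `2^d · 2^(2^d)`. -/
def levinLen (d : ℕ) : ℕ := 2^d * 2^(2^d)

/-- The binary expansion of Levin's number `λ = λ₀λ₁λ₂⋯`. -/
def levinWord (p : ℕ) : ZMod 2 := go 0 p
where
  go (d p : ℕ) : ZMod 2 :=
    if p < levinLen d then levinBlock d p else go (d+1) (p - levinLen d)
  termination_by p
  decreasing_by
    
    have h1 : 0 < levinLen d :=
      Nat.mul_pos (Nat.two_pow_pos d) (Nat.two_pow_pos (2^d))
    omega

/-- Levin's number as a real number in `[0,1)`. -/
noncomputable def levinReal : ℝ := ∑' p : ℕ, ((levinWord p).val : ℝ) / 2^(p+1)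

/-- Distance from a real number to the nearest integer. -/
noncomputable def torusDist (y : ℝ) : ℝ := |y - round y|

/-- The pair-correlation counting function
`F_N(s) = (1/N) · #{(i,j) : 1 ≤ i ≠ j ≤ N, ‖x_i − x_j‖ < s/N}`. -/
noncomputable def pairF (x : ℕ → ℝ) (N : ℕ) (s : ℝ) : ℝ :=
  (Nat.card {p : ℕ × ℕ // 1 ≤ p.1 ∧ p.1 ≤ N ∧ 1 ≤ p.2 ∧ p.2 ≤ N ∧ p.1 ≠ p.2 ∧
      torusDist (x p.1 - x p.2) < s / N} : ℝ) / N

/-- Poissonian pair correlations: `F_N(s) → 2s` for every `s ≥ 0`. -/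
def PoissonianPC (x : ℕ → ℝ) : Prop :=
  ∀ s : ℝ, 0 ≤ s → Filter.Tendsto (fun N => pairF x N s) Filter.atTop (nhds (2*s))

/-! Since `M_d` is an involution, the block `M_d w_n` can be prescribed: the word `v` required
in the conclusion is `M_d w_n` exactly for the `n` with `w_n = M_d v`, and this `n` is unique.
The last row of `M_d` is the last unit vector, so `M_d w_n` ends with the parity bit of `n`;
as `v` ends with `a_z = 0`, `n` is even. The last column of `M_d` is all ones, so for even `n`
the next block `M_d w_{n+1}` is the complement of `v`, and the condition on `a` says precisely
that `a` is the window of `v (1 - v)` starting at offset `e - z`. -/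

lemma pascalM_succ_apply (d : ℕ) (i j : Fin (2^(d+1))) :
    pascalM (d+1) i j =
      if hi : i.val < 2^d then
        (if hj : j.val < 2^d then pascalM d ⟨i.val, hi⟩ ⟨j.val, hj⟩
         else pascalM d ⟨i.val, hi⟩ ⟨j.val - 2^d, by have := j.isLt; omega⟩)
      else
        (if hj : j.val < 2^d then 0
         else pascalM d ⟨i.val - 2^d, by have := i.isLt; omega⟩
            ⟨j.val - 2^d, by have := j.isLt; omega⟩) := by
  rw [pascalM, Matrix.reindex_apply, Matrix.submatrix_apply]
  simp only [Equiv.symm_trans_apply, finCongr_symm, finCongr_apply]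
  simp [finSumFinEquiv, Fin.addCases, Matrix.fromBlocks, Fin.castLT, Fin.subNat]
  split_ifs <;> rfl

lemma pascalM_mul_self (d : ℕ) : pascalM d * pascalM d = 1 := by
  induction d with
  | zero =>
    ext i j
    fin_cases i; fin_cases j
    rfl
  | succ d ih =>
    rw [pascalM, Matrix.reindex_apply, Matrix.submatrix_mul_equiv, Matrix.fromBlocks_multiply,
      ih, CharTwo.add_self_eq_zero]
    simp only [mul_zero, add_zero, zero_mul, zero_add, Matrix.fromBlocks_one]
    exact Matrix.submatrix_one_equiv _

lemma pascalM_mulVec_involutive (d : ℕ) : Function.Involutive (pascalM d).mulVec := fun v => by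
  rw [Matrix.mulVec_mulVec, pascalM_mul_self, Matrix.one_mulVec]

lemma pascalM_apply_of_last_col : ∀ (d : ℕ) (i j : Fin (2^d)), j.val = 2^d - 1 →
    pascalM d i j = 1
  | 0, _, _, _ => rfl
  | d+1, i, j, hj => by
    rw [pascalM_succ_apply]
    split_ifs <;> first | omega | exact pascalM_apply_of_last_col d _ _ (by dsimp only; omega)

lemma pascalM_apply_of_last_row : ∀ (d : ℕ) (i j : Fin (2^d)), i.val = 2^d - 1 →
    pascalM d i j = if j = i then 1 else 0
  | 0, i, j, _ => by simp [pascalM, Subsingleton.elim (α := Fin 1) j i]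
  | d+1, i, j, hi => by
    rw [pascalM_succ_apply, dif_neg (by omega)]
    simp only [Fin.ext_iff]
    split_ifs with hj hji hji
    · omega
    · rfl
    · rw [pascalM_apply_of_last_row d _ _ (by dsimp only; omega), if_pos (by ext; dsimp only; omega)]
    · rw [pascalM_apply_of_last_row d _ _ (by dsimp only; omega), if_neg (by
        rw [Fin.ext_iff]; dsimp only; omega)]

lemma pascalM_mulVec_apply_of_last (d : ℕ) (w : Fin (2^d) → ZMod 2) (i : Fin (2^d))
    (hi : i.val = 2^d - 1) : (pascalM d).mulVec w i = w i := by
  simp [Matrix.mulVec, dotProduct, pascalM_apply_of_last_row d i _ hi]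

lemma vecOf_injOn (e : ℕ) : Set.InjOn (vecOf e) (Set.Iio (2^e)) := by
  intro n hn m hm h
  apply Nat.eq_of_testBit_eq
  intro k
  by_cases hk : k < e
  · have hbit := congrArg ZMod.val (congrFun h ⟨e - 1 - k, by omega⟩)
    simp only [vecOf, show e - 1 - (e - 1 - k) = k by omega] at hbit
    rw [ZMod.val_cast_of_lt (Nat.mod_lt _ two_pos), ZMod.val_cast_of_lt (Nat.mod_lt _ two_pos)]
      at hbit
    rw [Nat.testBit_eq_decide_div_mod_eq, Nat.testBit_eq_decide_div_mod_eq, hbit]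
  · have hle : 2^e ≤ 2^k := Nat.pow_le_pow_right two_pos (by omega)
    rw [Nat.testBit_eq_false_of_lt (lt_of_lt_of_le hn hle),
      Nat.testBit_eq_false_of_lt (lt_of_lt_of_le hm hle)]

lemma vecOf_surjOn (e : ℕ) : Set.SurjOn (vecOf e) (Set.Iio (2^e)) Set.univ := by
  intro w _
  have hinj : Function.Injective (fun n : Fin (2^e) => vecOf e n) :=
    fun n m h => Fin.ext (vecOf_injOn e n.isLt m.isLt h)
  obtain ⟨n, hn⟩ := ((Fintype.bijective_iff_injective_and_card _).2 ⟨hinj, by simp⟩).2 w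
  exact ⟨n, n.isLt, hn⟩

lemma vecOf_apply_of_last (e n : ℕ) (i : Fin e) (hi : i.val = e - 1) :
    vecOf e n i = n := by
  simp [vecOf, hi]

lemma even_of_vecOf_apply_of_last_eq_zero {e n : ℕ} (i : Fin e) (hi : i.val = e - 1)
    (h : vecOf e n i = 0) : Even n := by
  rwa [vecOf_apply_of_last e n i hi, ZMod.natCast_eq_zero_iff_even] at h

lemma vecOf_succ_of_even {e n : ℕ} (hn : Even n) (i : Fin e) (hi : i.val = e - 1) :
    vecOf e (n+1) = vecOf e n + Pi.single i 1 := by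
  ext j
  by_cases hji : j = i
  · subst hji
    simp [vecOf_apply_of_last e _ j hi]
  · have hj : e - 1 - j.val = (e - 1 - j.val - 1) + 1 := by
      have := Fin.val_ne_of_ne hji; omega
    obtain ⟨m, rfl⟩ := hn
    simp only [vecOf, Pi.add_apply, Pi.single_eq_of_ne hji, add_zero]
    rw [hj, pow_succ', ← Nat.div_div_eq_div_mul, ← Nat.div_div_eq_div_mul,
      show (m + m + 1) / 2 = (m + m) / 2 by omega]

lemma pascalM_mulVec_vecOf_succ_of_even (d : ℕ) {n : ℕ} (hn : Even n) :
    (pascalM d).mulVec (vecOf (2^d) (n+1)) = (pascalM d).mulVec (vecOf (2^d) n) + 1 := by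
  have hlast : 2^d - 1 < 2^d := Nat.sub_lt (Nat.two_pow_pos d) one_pos
  rw [vecOf_succ_of_even hn ⟨2^d - 1, hlast⟩ rfl, Matrix.mulVec_add, Matrix.mulVec_single]
  ext i
  simp [pascalM_apply_of_last_col d i ⟨2^d - 1, hlast⟩ rfl]

lemma levinBlock_mul_add (d n r : ℕ) (hr : r < 2^d) :
    levinBlock d (n * 2^d + r) = (pascalM d).mulVec (vecOf (2^d) n) ⟨r, hr⟩ := by
  have hdiv : (n * 2^d + r) / 2^d = n := by
    rw [add_comm, Nat.add_mul_div_right _ _ (Nat.two_pow_pos d), Nat.div_eq_of_lt hr, zero_add]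
  have hmod : (n * 2^d + r) % 2^d = r := by
    rw [add_comm, Nat.add_mul_mod_self_right, Nat.mod_eq_of_lt hr]
  simp only [levinBlock, hdiv, hmod]

lemma levinBlock_succ_mul_add_of_even (d : ℕ) {n : ℕ} (hn : Even n) (r : ℕ) (hr : r < 2^d) :
    levinBlock d ((n+1) * 2^d + r) = levinBlock d (n * 2^d + r) + 1 := by
  rw [levinBlock_mul_add d _ r hr, levinBlock_mul_add d _ r hr,
    pascalM_mulVec_vecOf_succ_of_even d hn, Pi.add_apply, Pi.one_apply]

/-- The word `(complement of a_{z+1} ⋯ a_e) a_1 ⋯ a_z`, with `e = 2^d` and `a` indexed from `0`. -/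
def alignedWord (d z : ℕ) (a : Fin (d + 2^d) → ZMod 2) : Fin (2^d) → ZMod 2 := fun i =>
  if h : i.val < 2^d - z then 1 - a ⟨z + i.val, by omega⟩
  else a ⟨i.val - (2^d - z), by have := i.isLt; omega⟩

section alignedWord

variable {d z : ℕ} {a : Fin (d + 2^d) → ZMod 2}

lemma alignedWord_apply_of_lt {r : ℕ} (hr : r < 2^d) (h : r < 2^d - z) :
    alignedWord d z a ⟨r, hr⟩ = 1 - a ⟨z + r, by omega⟩ :=
  dif_pos h

lemma alignedWord_apply_of_le {r : ℕ} (hr : r < 2^d) (h : 2^d - z ≤ r) :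
    alignedWord d z a ⟨r, hr⟩ = a ⟨r - (2^d - z), by omega⟩ :=
  dif_neg (not_lt.2 h)

lemma alignedWord_apply_last (hz : 1 ≤ z) (hz2 : z ≤ 2^d) :
    alignedWord d z a ⟨2^d - 1, Nat.sub_lt (Nat.two_pow_pos d) one_pos⟩ = a ⟨z - 1, by omega⟩ := by
  rw [alignedWord_apply_of_le _ (by omega)]
  congr 2
  omega

lemma window_eq_of_alignedWord_blocks (f : ℕ → ZMod 2) (q : ℕ)
    (hcur : ∀ r (hr : r < 2^d), f (q + r) = alignedWord d z a ⟨r, hr⟩)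
    (hnext : ∀ r (hr : r < 2^d), f (q + 2^d + r) = alignedWord d z a ⟨r, hr⟩ + 1)
    (hcomp : ∀ i : Fin d,
      a ⟨2^d + i.val, by rw [Nat.add_comm d (2^d)]; exact Nat.add_lt_add_left i.isLt (2^d)⟩ =
        1 - a ⟨i.val, Nat.lt_of_lt_of_le i.isLt (Nat.le_add_right d (2^d))⟩)
    (hz1 : d ≤ z) (hz2 : z ≤ 2^d) (t : Fin (d + 2^d)) :
    f (q + (2^d - z) + t) = a t := by
  have ht := t.isLt
  by_cases htz : t.val < z
  · rw [add_assoc, hcur _ (by omega), alignedWord_apply_of_le _ (by omega)]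
    congr 1; ext; dsimp only; omega
  rw [show q + (2^d - z) + t = q + 2^d + (t - z) by omega, hnext _ (by omega)]
  by_cases hte : t.val < 2^d
  · rw [alignedWord_apply_of_lt _ (by omega)]
    have : t = ⟨z + (t.val - z), by omega⟩ := by ext; dsimp only; omega
    rw [congrArg a this]
    grind
  · rw [alignedWord_apply_of_le _ (by omega),
      show (⟨t.val - z - (2^d - z), by omega⟩ : Fin (d + 2^d)) = ⟨t.val - 2^d, by omega⟩ by
        ext; dsimp only; omega]
    have : t = ⟨2^d + (t.val - 2^d), by omega⟩ := by ext; dsimp only; omega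
    rw [congrArg a this, hcomp ⟨t - 2^d, by omega⟩]
    grind

end alignedWord

/-- given a word `a` of length `d + e` (`e = 2^d`) whose first
`d` letters are complementary to its last `d` letters, and an index `z` with
`d ≤ z ≤ e` and `a_z = 0`, there is a unique even `n` such that `a` occurs in
`λ_d` at the position aligning `a_z` with the last symbol of the block
`M_d w_n`; namely `M_d w_n = (complement of a_{z+1}…a_e) a_1…a_z`. -/
theorem unique_occurrence_at_alignment (d z : ℕ) (hd : 1 ≤ d)
    (a : Fin (d + 2^d) → ZMod 2)
    (hcomp : ∀ i : Fin d,
      a ⟨2^d + i.val, by rw [Nat.add_comm d (2^d)]; exact Nat.add_lt_add_left i.isLt (2^d)⟩ =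
        1 - a ⟨i.val, Nat.lt_of_lt_of_le i.isLt (Nat.le_add_right d (2^d))⟩)
    (hz1 : d ≤ z) (hz2 : z ≤ 2^d)
    (haz : a ⟨z - 1, by omega⟩ = 0) :
    ∃! n : ℕ, Even n ∧ n < 2^(2^d) ∧
      (∀ t : Fin (d + 2^d),
        levinBlock d (n * 2^d + (2^d - z) + t.val) = a t) ∧
      (pascalM d).mulVec (vecOf (2^d) n) = fun i : Fin (2^d) =>
        if h : i.val < 2^d - z then
          1 - a ⟨z + i.val, by omega⟩
        else
          a ⟨i.val - (2^d - z), by have := i.isLt; omega⟩ := by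
  change ∃! n : ℕ, _ ∧ _ ∧ _ ∧ (pascalM d).mulVec (vecOf (2^d) n) = alignedWord d z a
  obtain ⟨n, hn, hw⟩ := vecOf_surjOn (2^d) (Set.mem_univ ((pascalM d).mulVec (alignedWord d z a)))
  have hblock : (pascalM d).mulVec (vecOf (2^d) n) = alignedWord d z a := by
    rw [hw, pascalM_mulVec_involutive]
  have heven : Even n := by
    have hlast := Nat.sub_lt (Nat.two_pow_pos d) one_pos
    apply even_of_vecOf_apply_of_last_eq_zero ⟨2^d - 1, hlast⟩ rfl
    rw [← pascalM_mulVec_apply_of_last d (vecOf (2^d) n) ⟨2^d - 1, hlast⟩ rfl, hblock,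
      alignedWord_apply_last (by omega) hz2, haz]
  have hcur (r : ℕ) (hr : r < 2^d) : levinBlock d (n * 2^d + r) = alignedWord d z a ⟨r, hr⟩ := by
    rw [levinBlock_mul_add d n r hr, hblock]
  have hnext (r : ℕ) (hr : r < 2^d) :
      levinBlock d (n * 2^d + 2^d + r) = alignedWord d z a ⟨r, hr⟩ + 1 := by
    rw [← add_one_mul, levinBlock_succ_mul_add_of_even d heven r hr, hcur r hr]
  refine ⟨n, ⟨heven, hn, window_eq_of_alignedWord_blocks _ _ hcur hnext hcomp hz1 hz2, hblock⟩, ?_⟩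
  rintro m ⟨-, hm, -, hblock'⟩
  exact vecOf_injOn _ hm hn ((pascalM_mulVec_involutive d).injective (hblock'.trans hblock.symm))
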